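/- Let N ≥ 1 and suppose there exist n ≥ 1 and b₀,…,bₙ ∈ ℝ with b₀ ≠ 0, bₙ = 1, Σ_{j=0}^{n−1}|b_j| < 2, such that P(x) = Σ b_j x^j satisfies P^{(i)}(1/λ) = 0 for 0 ≤ i ≤ N−1, and the linear map π : ℝⁿ → ℝ^N defined by π(u) = (Σ_{k=0}^{n−1} u_{k−n} B_k^{(N−i)}(λ))_{1≤i≤N} has rank N. Then the open set A := π(Δ) (Δ the box (−η^n,η^n)×⋯×(−η,η) with η > 1 chosen so that η^n Σ_{j<n}|b_j| < η+1) satisfies Closure(A) ⊆ F_{+1}(A) ∪ F_{−1}(A), where F_δ(X) = JX + δT as above. -/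

import Mathlib

open Polynomial

/-- The partial polynomial `B_k(x) = Σ_{j=0}^{k} b_j x^{k−j}`. -/
noncomputable def Bpoly (b : ℕ → ℝ) (k : ℕ) : Polynomial ℝ :=
  ∑ j ∈ Finset.range (k + 1), C (b j) * X ^ (k - j)

/-- The upper bidiagonal matrix `J` with `λ` on the diagonal and
`N−1, N−2, …, 1` on the superdiagonal. -/
noncomputable def Jmat (N : ℕ) (lam : ℝ) : Matrix (Fin N) (Fin N) ℝ :=
  Matrix.of fun i j =>
    if j = i then lam else if (j : ℕ) = (i : ℕ) + 1 then ((N : ℝ) - 1 - (i : ℕ)) else 0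

/-- The vector `T = (0,…,0,1)`. -/
def Tvec (N : ℕ) : Fin N → ℝ := fun i => if (i : ℕ) = N - 1 then 1 else 0

/-- The affine map `F_δ(X) = JX + δT` on `ℝᴺ`. -/
noncomputable def Fmap (N : ℕ) (lam δ : ℝ) (x : Fin N → ℝ) : Fin N → ℝ :=
  (Jmat N lam).mulVec x + δ • Tvec N

/-- The projection `π(u_{−n},…,u_{−1}) = (Σ_{k<n} u_{k−n} B_k^{(N−i)}(λ))_{1 ≤ i ≤ N}`. -/
noncomputable def piMap (n N : ℕ) (b : ℕ → ℝ) (lam : ℝ) (u : Fin n → ℝ) : Fin N → ℝ :=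
  fun i => ∑ k : Fin n, u k * (derivative^[N - 1 - (i : ℕ)] (Bpoly b (k : ℕ))).eval lam

lemma Bpoly_succ (b : ℕ → ℝ) (k : ℕ) :
    Bpoly b (k + 1) = X * Bpoly b k + C (b (k + 1)) := by
  unfold Bpoly
  rw [Finset.sum_range_succ, Finset.mul_sum]
  congr 1
  · refine Finset.sum_congr rfl fun j hj => ?_
    have hj' : j ≤ k := Nat.lt_succ_iff.mp (Finset.mem_range.mp hj)
    have : k + 1 - j = (k - j) + 1 := by omega
    rw [this, pow_succ]
    ring
  · simp

lemma iter_deriv_X_mul (Q : Polynomial ℝ) (m : ℕ) :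
    derivative^[m + 1] (X * Q) =
      X * derivative^[m + 1] Q + ((m : ℝ) + 1) • derivative^[m] Q := by
  induction m with
  | zero => simp [derivative_mul, add_comm]
  | succ m ih =>
    rw [Function.iterate_succ_apply', ih]
    simp only [derivative_add, derivative_mul, derivative_X, one_mul, derivative_smul,
      ← Function.iterate_succ_apply']
    push_cast
    module

/-- `cp b lam m j = B_j^{(m)}(lam)`. -/
noncomputable def cp (b : ℕ → ℝ) (lam : ℝ) (m j : ℕ) : ℝ :=
  (derivative^[m] (Bpoly b j)).eval lam

lemma iter_deriv_add (p q : Polynomial ℝ) (m : ℕ) :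
    derivative^[m] (p + q) = derivative^[m] p + derivative^[m] q := by
  induction m generalizing p q with
  | zero => rfl
  | succ m ih => simp [Function.iterate_succ_apply, derivative_add, ih]

lemma cp_step (b : ℕ → ℝ) (lam : ℝ) (k m : ℕ) :
    cp b lam (m + 1) (k + 1) =
      lam * cp b lam (m + 1) k + ((m : ℝ) + 1) * cp b lam m k := by
  unfold cp
  rw [Bpoly_succ, iter_deriv_add, iter_deriv_X_mul]
  have : derivative^[m + 1] (C (b (k + 1))) = 0 := by
    rw [Function.iterate_succ_apply, derivative_C]
    simp
  rw [this]
  simp [smul_eq_mul, mul_comm]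

lemma cp_step0 (b : ℕ → ℝ) (lam : ℝ) (k : ℕ) :
    cp b lam 0 (k + 1) = lam * cp b lam 0 k + b (k + 1) := by
  unfold cp
  rw [Bpoly_succ]
  simp

lemma Bpoly_zero (b : ℕ → ℝ) : Bpoly b 0 = C (b 0) := by
  simp [Bpoly]

lemma cp_zero_pos (b : ℕ → ℝ) (lam : ℝ) (m : ℕ) (hm : 0 < m) : cp b lam m 0 = 0 := by
  unfold cp
  obtain ⟨m', rfl⟩ : ∃ m', m = m' + 1 := ⟨m - 1, by omega⟩
  rw [Bpoly_zero, Function.iterate_succ_apply, derivative_C]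
  simp

lemma cp_zero_zero (b : ℕ → ℝ) (lam : ℝ) : cp b lam 0 0 = b 0 := by
  simp [cp, Bpoly_zero]

lemma reflect_pow_X_sub_C (μ : ℝ) (M : ℕ) :
    reflect M ((X - C μ) ^ M) = (1 - C μ * X) ^ M := by
  induction M with
  | zero => simp
  | succ M ih =>
    rw [pow_succ,
      reflect_mul ((X - C μ) ^ M) (X - C μ)
        (by simp [natDegree_pow] : ((X - C μ) ^ M).natDegree ≤ M)
        (by simp [natDegree_X_sub_C] : (X - C μ).natDegree ≤ 1), ih]
    have h1 : reflect 1 (X - C μ) = 1 - C μ * X := by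
      rw [sub_eq_add_neg, ← C_neg, reflect_add]
      have hX : reflect 1 (X : Polynomial ℝ) = 1 := by
        simpa using reflect_monomial 1 1 (R := ℝ)
      have hC : reflect 1 (C (-μ)) = C (-μ) * X := by
        simpa using reflect_C_mul_X_pow 1 0 (c := -μ)
      rw [hX, hC, map_neg]
      ring
    rw [h1, pow_succ]

lemma Bzero (n N : ℕ) (hN : 1 ≤ N) (b : ℕ → ℝ) (hb0 : b 0 ≠ 0) (hbn : b n = 1)
    (lam : ℝ) (hlam : lam ≠ 0)
    (hP : ∀ i < N,
      (derivative^[i] (∑ j ∈ Finset.range (n + 1), C (b j) * X ^ j)).eval (1 / lam) = 0) :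
    ∀ m < N, cp b lam m n = 0 := by
  set P : Polynomial ℝ := ∑ j ∈ Finset.range (n + 1), C (b j) * X ^ j with hPdef
  have hPcoeff : P.coeff n = 1 := by
    rw [hPdef, finset_sum_coeff]
    rw [Finset.sum_eq_single n]
    · simp [coeff_C_mul, coeff_X_pow, hbn]
    · intro j hj hjn
      simp [coeff_C_mul, coeff_X_pow, hjn, Ne.symm hjn]
    · intro h
      exact absurd (Finset.self_mem_range_succ n) h
  have hPne : P ≠ 0 := fun h => by simp [h] at hPcoeff
  have hmult : N ≤ P.rootMultiplicity (1 / lam) := by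
    have h1 : N - 1 < P.rootMultiplicity (1 / lam) := by
      apply lt_rootMultiplicity_of_isRoot_iterate_derivative hPne
      intro m hm
      exact hP m (by omega)
    omega
  have hdvd : (X - C (1 / lam)) ^ N ∣ P :=
    dvd_trans (pow_dvd_pow _ hmult) (pow_rootMultiplicity_dvd P _)
  obtain ⟨Q, hQ⟩ := hdvd
  have hQne : Q ≠ 0 := by
    rintro rfl
    rw [mul_zero] at hQ
    exact hPne hQ
  have hdegP : P.natDegree ≤ n := by
    apply Polynomial.natDegree_sum_le_of_forall_le
    intro j hj
    exact (natDegree_C_mul_X_pow_le _ _).trans (Nat.lt_succ_iff.mp (Finset.mem_range.mp hj))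
  have hpowne : ((X - C (1 / lam)) ^ N : Polynomial ℝ) ≠ 0 :=
    pow_ne_zero _ (X_sub_C_ne_zero _)
  have hdegsplit : P.natDegree = N + Q.natDegree := by
    rw [hQ, natDegree_mul hpowne hQne, natDegree_pow, natDegree_X_sub_C, mul_one]
  have hNn : N ≤ n := by omega
  have hdegQ : Q.natDegree ≤ n - N := by omega
  have hrefl : Bpoly b n = reflect n P := by
    have hsum : reflect n P = ∑ j ∈ Finset.range (n + 1), reflect n (C (b j) * X ^ j) := by
      ext i
      simp only [coeff_reflect, finset_sum_coeff, hPdef]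
    rw [hsum, Bpoly]
    refine Finset.sum_congr rfl fun j hj => ?_
    rw [reflect_C_mul_X_pow, revAt_le (Nat.lt_succ_iff.mp (Finset.mem_range.mp hj))]
  have hrefl2 : Bpoly b n = (1 - C (1 / lam) * X) ^ N * reflect (n - N) Q := by
    rw [hrefl, hQ]
    conv_lhs => rw [show n = N + (n - N) by omega]
    rw [reflect_mul _ _ (by simp [natDegree_pow, natDegree_X_sub_C] :
        ((X - C (1 / lam)) ^ N : Polynomial ℝ).natDegree ≤ N) hdegQ,
      reflect_pow_X_sub_C]
  have hfact : (1 - C (1 / lam : ℝ) * X) = C (-(1 / lam)) * (X - C lam) := by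
    have h2 : (-(1 / lam)) * lam = -1 := by field_simp
    rw [mul_sub, ← C_mul, h2, map_neg, map_neg, map_one]
    ring
  have hdvd2 : (X - C lam) ^ N ∣ Bpoly b n := by
    refine ⟨C (-(1 / lam)) ^ N * reflect (n - N) Q, ?_⟩
    rw [hrefl2, hfact, mul_pow]
    ring
  have hBcoeff : (Bpoly b n).coeff n = b 0 := by
    rw [Bpoly, finset_sum_coeff, Finset.sum_eq_single 0]
    · simp [coeff_C_mul, coeff_X_pow]
    · intro j hj hjn
      have hj' : j ≤ n := Nat.lt_succ_iff.mp (Finset.mem_range.mp hj)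
      have : n - j ≠ n := by omega
      simp [coeff_C_mul, coeff_X_pow, Ne.symm this]
    · intro h
      simp at h
  have hBne : Bpoly b n ≠ 0 := fun h => hb0 (by simp [h] at hBcoeff; exact hBcoeff.symm)
  have hmult2 : N ≤ (Bpoly b n).rootMultiplicity lam :=
    (le_rootMultiplicity_iff hBne).mpr hdvd2
  intro m hm
  exact isRoot_iterate_derivative_of_lt_rootMultiplicity (lt_of_lt_of_le hm hmult2)
lemma Jmat_mulVec (N : ℕ) (lam : ℝ) (x : Fin N → ℝ) (i : Fin N) :
    (Jmat N lam).mulVec x i =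
      lam * x i +
        (if h : (i : ℕ) + 1 < N then ((N : ℝ) - 1 - (i : ℕ)) * x ⟨(i : ℕ) + 1, h⟩ else 0) := by
  unfold Jmat
  simp only [Matrix.mulVec, dotProduct, Matrix.of_apply]
  have key : ∀ j : Fin N,
      (if j = i then lam else if (j : ℕ) = (i : ℕ) + 1 then ((N : ℝ) - 1 - (i : ℕ)) else 0) * x j
        = (if j = i then lam * x j else 0)
          + (if (j : ℕ) = (i : ℕ) + 1 then ((N : ℝ) - 1 - (i : ℕ)) * x j else 0) := by
    intro j
    rcases eq_or_ne j i with rfl | hji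
    · have h2 : ¬((j : ℕ) = (j : ℕ) + 1) := by omega
      simp [h2]
    · simp only [if_neg hji]
      split_ifs <;> simp
  rw [Finset.sum_congr rfl fun j _ => key j, Finset.sum_add_distrib]
  congr 1
  · rw [Finset.sum_ite_eq' Finset.univ i (fun j => lam * x j)]
    simp
  · split_ifs with h
    · have h3 : ∀ j : Fin N, ((j : ℕ) = (i : ℕ) + 1) ↔ j = ⟨(i : ℕ) + 1, h⟩ := by
        intro j
        constructor
        · intro hh; exact Fin.ext hh
        · intro hh; subst hh; rfl
      simp_rw [h3]
      rw [Finset.sum_ite_eq' Finset.univ (⟨(i : ℕ) + 1, h⟩ : Fin N)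
        (fun j => ((N : ℝ) - 1 - (i : ℕ)) * x j)]
      simp
    · have h4 : ∀ j : Fin N, ¬((j : ℕ) = (i : ℕ) + 1) := by
        intro j; have := j.isLt; omega
      simp [h4]

/-- Under the hypotheses of the covering property proof, the open set `A = π(Δ)`
satisfies `Closure(A) ⊆ F_{+1}(A) ∪ F_{−1}(A)`. -/
theorem stmt_9 (n N : ℕ) (hn : 1 ≤ n) (hN : 1 ≤ N)
    (lam : ℝ) (hlam : lam ∈ Set.Ioo (0 : ℝ) 1)
    (b : ℕ → ℝ) (hb0 : b 0 ≠ 0) (hbn : b n = 1)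
    (hsum : (∑ j ∈ Finset.range n, |b j|) < 2)
    (hP : ∀ i < N,
      (derivative^[i] (∑ j ∈ Finset.range (n + 1), C (b j) * X ^ j)).eval (1 / lam) = 0)
    (hrank : Function.Surjective (piMap n N b lam))
    (η : ℝ) (hη : 1 < η)
    (hηsum : η ^ n * (∑ j ∈ Finset.range n, |b j|) < η + 1) :
    closure (piMap n N b lam '' {v : Fin n → ℝ | ∀ i, |v i| < η ^ (n - (i : ℕ))}) ⊆
      Fmap N lam 1 '' (piMap n N b lam '' {v : Fin n → ℝ | ∀ i, |v i| < η ^ (n - (i : ℕ))}) ∪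
      Fmap N lam (-1) '' (piMap n N b lam '' {v : Fin n → ℝ | ∀ i, |v i| < η ^ (n - (i : ℕ))}) := by
  obtain ⟨n', rfl⟩ : ∃ n', n = n' + 1 := ⟨n - 1, by omega⟩
  have hlam0 : lam ≠ 0 := ne_of_gt hlam.1
  have hB0 : ∀ m < N, cp b lam m (n' + 1) = 0 :=
    Bzero (n' + 1) N hN b hb0 hbn lam hlam0 hP
  have hcp : ∀ m j : ℕ, (derivative^[m] (Bpoly b j)).eval lam = cp b lam m j := fun _ _ => rfl
  set Δ : Set (Fin (n' + 1) → ℝ) := {v | ∀ i, |v i| < η ^ (n' + 1 - (i : ℕ))} with hΔ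
  have hcont : Continuous (piMap (n' + 1) N b lam) := by
    unfold piMap
    exact continuous_pi fun i => continuous_finset_sum _ fun k _ =>
      (continuous_apply k).mul continuous_const
  set K : Set (Fin (n' + 1) → ℝ) :=
    Set.univ.pi fun i => Set.Icc (-(η ^ (n' + 1 - (i : ℕ)))) (η ^ (n' + 1 - (i : ℕ))) with hK
  have hKcomp : IsCompact K := isCompact_univ_pi fun i => isCompact_Icc
  have hΔK : Δ ⊆ K := by
    intro v hv i _
    exact ⟨(abs_le.mp (le_of_lt (hv i))).1, (abs_le.mp (le_of_lt (hv i))).2⟩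
  have hclos : closure (piMap (n' + 1) N b lam '' Δ) ⊆ piMap (n' + 1) N b lam '' K :=
    closure_minimal (Set.image_mono hΔK) (hKcomp.image hcont).isClosed
  intro x hx
  obtain ⟨u, huK, rfl⟩ := hclos hx
  have hub : ∀ i : Fin (n' + 1), |u i| ≤ η ^ (n' + 1 - (i : ℕ)) := fun i =>
    abs_le.mpr (huK i (Set.mem_univ i))
  set S : ℝ := ∑ k : Fin (n' + 1), u k * b (k : ℕ) with hSdef
  have hη0 : (0 : ℝ) < η := lt_trans one_pos hη
  have hSb : |S| < η + 1 := by
    have h1 : |S| ≤ ∑ k : Fin (n' + 1), |u k| * |b (k : ℕ)| := by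
      calc |S| ≤ ∑ k : Fin (n' + 1), |u k * b (k : ℕ)| := Finset.abs_sum_le_sum_abs _ _
        _ = ∑ k : Fin (n' + 1), |u k| * |b (k : ℕ)| := by simp [abs_mul]
    have h2 : ∀ k : Fin (n' + 1), |u k| * |b (k : ℕ)| ≤ η ^ (n' + 1) * |b (k : ℕ)| := by
      intro k
      apply mul_le_mul_of_nonneg_right _ (abs_nonneg _)
      exact (hub k).trans (pow_le_pow_right₀ (le_of_lt hη) (by omega))
    calc |S| ≤ ∑ k : Fin (n' + 1), η ^ (n' + 1) * |b (k : ℕ)| :=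
          h1.trans (Finset.sum_le_sum fun k _ => h2 k)
      _ = η ^ (n' + 1) * ∑ k : Fin (n' + 1), |b (k : ℕ)| := by rw [← Finset.mul_sum]
      _ = η ^ (n' + 1) * ∑ j ∈ Finset.range (n' + 1), |b j| := by
          rw [Fin.sum_univ_eq_sum_range (fun j => |b j|)]
      _ < η + 1 := hηsum
  set δ : ℝ := if 0 ≤ S then 1 else -1 with hδ
  set t : ℝ := δ - S with htdef
  have htb : |t| < η := by
    rw [abs_lt] at hSb ⊢
    rw [htdef, hδ]
    split_ifs with h
    · constructor <;> linarith
    · push_neg at h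
      constructor <;> linarith
  set v : Fin (n' + 1) → ℝ := Fin.snoc (fun k : Fin n' => u k.succ) t with hv
  have hvcast : ∀ k : Fin n', v k.castSucc = u k.succ := fun k => by
    rw [hv]; exact Fin.snoc_castSucc _ _ _
  have hvlast : v (Fin.last n') = t := by rw [hv]; exact Fin.snoc_last _ _
  have hvΔ : v ∈ Δ := by
    intro i
    refine Fin.lastCases ?_ ?_ i
    · rw [hvlast]
      have h5 : n' + 1 - ((Fin.last n' : Fin (n' + 1)) : ℕ) = 1 := by simp
      rw [h5, pow_one]
      exact htb
    · intro k
      rw [hvcast k]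
      have h1 : |u k.succ| ≤ η ^ (n' + 1 - ((k : ℕ) + 1)) := by
        have := hub k.succ
        rwa [Fin.val_succ] at this
      have h6 : ((k.castSucc : Fin (n' + 1)) : ℕ) = (k : ℕ) := rfl
      rw [h6]
      calc |u k.succ| ≤ η ^ (n' + 1 - ((k : ℕ) + 1)) := h1
        _ < η ^ (n' + 1 - (k : ℕ)) := by
            apply pow_lt_pow_right₀ hη
            have := k.isLt
            omega
  have hshift : ∀ c' : ℕ → ℝ,
      ∑ k : Fin (n' + 1), v k * c' ((k : ℕ) + 1)
        = (∑ k : Fin (n' + 1), u k * c' (k : ℕ)) - u 0 * c' 0 + t * c' (n' + 1) := by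
    intro c'
    rw [Fin.sum_univ_castSucc (f := fun k : Fin (n' + 1) => v k * c' ((k : ℕ) + 1)),
      Fin.sum_univ_succ (f := fun k : Fin (n' + 1) => u k * c' (k : ℕ))]
    simp only [hvcast, hvlast, Fin.coe_castSucc, Fin.val_last, Fin.val_succ, Fin.val_zero]
    ring
  have hmain : piMap (n' + 1) N b lam u = Fmap N lam δ (piMap (n' + 1) N b lam v) := by
    funext i
    rw [Fmap, Pi.add_apply, Pi.smul_apply, smul_eq_mul, Jmat_mulVec]
    simp only [piMap, hcp]
    by_cases hi : (i : ℕ) + 1 < N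
    · rw [dif_pos hi]
      have hT : Tvec N i = 0 := by
        unfold Tvec
        rw [if_neg (by omega)]
      rw [hT, mul_zero, add_zero]
      obtain ⟨m', hm'⟩ : ∃ m', N - 1 - (i : ℕ) = m' + 1 := ⟨N - 2 - (i : ℕ), by omega⟩
      have hm2 : N - 1 - ((⟨(i : ℕ) + 1, hi⟩ : Fin N) : ℕ) = m' := by
        simp only []
        omega
      have hcast : ((N : ℝ) - 1 - (i : ℕ)) = (m' : ℝ) + 1 := by
        have hNat : N = (i : ℕ) + 1 + (m' + 1) := by omega
        rw [show ((N : ℕ) : ℝ) = (((i : ℕ) + 1 + (m' + 1) : ℕ) : ℝ) from by rw [← hNat]]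
        push_cast
        ring
      rw [hm', hm2, hcast]
      have hstep : ∀ k : Fin (n' + 1),
          v k * (lam * cp b lam (m' + 1) (k : ℕ) + ((m' : ℝ) + 1) * cp b lam m' (k : ℕ))
            = v k * cp b lam (m' + 1) ((k : ℕ) + 1) := fun k => by rw [← cp_step]
      calc (∑ k : Fin (n' + 1), u k * cp b lam (m' + 1) (k : ℕ))
          = (∑ k : Fin (n' + 1), u k * cp b lam (m' + 1) (k : ℕ)) - u 0 * cp b lam (m' + 1) 0
              + t * cp b lam (m' + 1) (n' + 1) := by
            rw [cp_zero_pos b lam (m' + 1) (by omega), hB0 (m' + 1) (by omega)]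
            ring
        _ = ∑ k : Fin (n' + 1), v k * cp b lam (m' + 1) ((k : ℕ) + 1) := (hshift _).symm
        _ = ∑ k : Fin (n' + 1),
              v k * (lam * cp b lam (m' + 1) (k : ℕ) + ((m' : ℝ) + 1) * cp b lam m' (k : ℕ)) := by
            exact Finset.sum_congr rfl fun k _ => (hstep k).symm
        _ = lam * (∑ k : Fin (n' + 1), v k * cp b lam (m' + 1) (k : ℕ))
              + ((m' : ℝ) + 1) * ∑ k : Fin (n' + 1), v k * cp b lam m' (k : ℕ) := by
            rw [Finset.mul_sum, Finset.mul_sum, ← Finset.sum_add_distrib]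
            exact Finset.sum_congr rfl fun k _ => by ring
    · rw [dif_neg hi]
      have hieq : (i : ℕ) = N - 1 := by have := i.isLt; omega
      have hT : Tvec N i = 1 := by unfold Tvec; rw [if_pos hieq]
      rw [hT, mul_one, add_zero]
      have hm0 : N - 1 - (i : ℕ) = 0 := by omega
      rw [hm0]
      have hstep : ∀ k : Fin (n' + 1),
          v k * (lam * cp b lam 0 (k : ℕ))
            = v k * cp b lam 0 ((k : ℕ) + 1) - v k * b ((k : ℕ) + 1) := fun k => by
        rw [cp_step0]; ring
      have h7 : lam * (∑ k : Fin (n' + 1), v k * cp b lam 0 (k : ℕ))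
          = (∑ k : Fin (n' + 1), v k * cp b lam 0 ((k : ℕ) + 1))
            - ∑ k : Fin (n' + 1), v k * b ((k : ℕ) + 1) := by
        rw [Finset.mul_sum, ← Finset.sum_sub_distrib]
        exact Finset.sum_congr rfl fun k _ => by rw [← hstep k]; ring
      rw [h7, hshift (fun j => cp b lam 0 j), hshift (fun j => b j)]
      simp only [cp_zero_zero, hB0 0 (by omega), hbn, ← hSdef]
      rw [htdef]
      ring
  by_cases hsig : 0 ≤ S
  · left
    refine ⟨piMap (n' + 1) N b lam v, ⟨v, hvΔ, rfl⟩, ?_⟩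
    rw [hmain, hδ, if_pos hsig]
  · right
    refine ⟨piMap (n' + 1) N b lam v, ⟨v, hvΔ, rfl⟩, ?_⟩
    rw [hmain, hδ, if_neg hsig]
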